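/- Every language in PostQAL is in QAL: if L ⊆ Σ* is recognized with some error bound ε < 1/2 by an RT-PostQFA, then there exists an RT-QFA whose acceptance probability exceeds 1/2 exactly on the members of L, i.e. L ∈ QAL with cutpoint 1/2. -/

import Mathlib

noncomputable section

/-- The input alphabet extended with the two endmarkers `¢` and `$`. -/
inductive ESym (α : Type) : Type where
  | cent : ESym α
  | dollar : ESym α
  | letter : α → ESym α

/-- The diagonal 0-1 projection matrix supported on a set of states. -/
def projM {m : ℕ} (S : Finset (Fin m)) : Matrix (Fin m) (Fin m) ℂ :=
  Matrix.diagonal (fun i => if i ∈ S then 1 else 0)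

/-- The density matrix obtained by applying, in order, the Kraus families for
`¢`, the letters of `w`, and `$` to the initial density matrix `|q₁⟩⟨q₁|`. -/
def qRun {α : Type} {n : ℕ} {k : ESym α → ℕ}
    (E : ∀ σ : ESym α, Fin (k σ) → Matrix (Fin (n + 1)) (Fin (n + 1)) ℂ)
    (w : List α) : Matrix (Fin (n + 1)) (Fin (n + 1)) ℂ :=
  (ESym.cent :: (w.map ESym.letter ++ [ESym.dollar])).foldl
    (fun ρ σ => ∑ i : Fin (k σ), E σ i * ρ * (E σ i).conjTranspose)
    (Matrix.single 0 0 1)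

/-- A real-time quantum finite automaton with postselection (RT-PostQFA). -/
structure PostQFA (α : Type) where
  n : ℕ
  k : ESym α → ℕ
  E : ∀ σ : ESym α, Fin (k σ) → Matrix (Fin (n + 1)) (Fin (n + 1)) ℂ
  kraus : ∀ σ : ESym α, ∑ i : Fin (k σ), (E σ i).conjTranspose * E σ i = 1
  Qpa : Finset (Fin (n + 1))
  Qpr : Finset (Fin (n + 1))
  disj : Disjoint Qpa Qpr
  postPos : ∀ w : List α,
    0 < ((projM Qpa * qRun E w).trace).re + ((projM Qpr * qRun E w).trace).re

/-- Acceptance probability before postselection. -/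
def PostQFA.pacc {α : Type} (M : PostQFA α) (w : List α) : ℝ :=
  ((projM M.Qpa * qRun M.E w).trace).re

/-- Rejection probability before postselection. -/
def PostQFA.prej {α : Type} (M : PostQFA α) (w : List α) : ℝ :=
  ((projM M.Qpr * qRun M.E w).trace).re

/-- Normalized acceptance probability of an RT-PostQFA. -/
def PostQFA.fa {α : Type} (M : PostQFA α) (w : List α) : ℝ :=
  M.pacc w / (M.pacc w + M.prej w)

/-- Recognition of a language with error bound `ε`. -/
def PostQFA.Recognizes {α : Type} (M : PostQFA α) (L : Set (List α)) (ε : ℝ) : Prop :=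
  ∀ w : List α, (w ∈ L → 1 - ε ≤ M.fa w) ∧ (w ∉ L → M.fa w ≤ ε)

/-- The class of languages recognized by RT-PostQFAs with bounded error. -/
def PostQAL {α : Type} (L : Set (List α)) : Prop :=
  ∃ (M : PostQFA α) (ε : ℝ), 0 ≤ ε ∧ ε < 1 / 2 ∧ M.Recognizes L ε

/-- Recognition with zero error: `fa = 1` on members, `fa = 0` on non-members. -/
def PostQFA.RecognizesZero {α : Type} (M : PostQFA α) (L : Set (List α)) : Prop :=
  ∀ w : List α, (w ∈ L → M.fa w = 1) ∧ (w ∉ L → M.fa w = 0)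

/-- The class of languages recognized by RT-PostQFAs with zero error. -/
def ZPostQAL {α : Type} (L : Set (List α)) : Prop :=
  ∃ M : PostQFA α, M.RecognizesZero L

/-- A standard real-time quantum finite automaton (RT-QFA). -/
structure QFA (α : Type) where
  n : ℕ
  k : ESym α → ℕ
  E : ∀ σ : ESym α, Fin (k σ) → Matrix (Fin (n + 1)) (Fin (n + 1)) ℂ
  kraus : ∀ σ : ESym α, ∑ i : Fin (k σ), (E σ i).conjTranspose * E σ i = 1
  Qa : Finset (Fin (n + 1))

/-- Acceptance probability of an RT-QFA. -/
def QFA.fa {α : Type} (M : QFA α) (w : List α) : ℝ :=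
  ((projM M.Qa * qRun M.E w).trace).re

/-!
Simulate `M` on one additional state. After the right endmarker, measure the state: a
postselection-accepting state moves to the accepting state `0`, a postselection-rejecting one to
the fresh state, and any other state to either with probability `1/2` (the fresh state is needed
because `M` may have a single state). Since `ρ_w` has trace one, the new acceptance probability is
`(1 + pᵃ(w) - pʳ(w)) / 2`, which exceeds `1/2` exactly when `pᵃ(w) > pʳ(w)`, that is, when
`fᵃ(w) > 1/2`; an error bound `ε < 1/2` separates members from non-members at this threshold.
-/

open Matrix

section Kraus

variable {ι ι' κ κ' : Type*} [Fintype ι] [Fintype κ] [Fintype κ']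

def krausMap (K : κ → Matrix ι ι ℂ) (ρ : Matrix ι ι ℂ) : Matrix ι ι ℂ :=
  ∑ i, K i * ρ * (K i)ᴴ

def IsKraus [DecidableEq ι] (K : κ → Matrix ι ι ℂ) : Prop :=
  ∑ i, (K i)ᴴ * K i = 1

theorem trace_krausMap [DecidableEq ι] {K : κ → Matrix ι ι ℂ} (hK : IsKraus K)
    (ρ : Matrix ι ι ℂ) : (krausMap K ρ).trace = ρ.trace := by
  rw [IsKraus] at hK
  simp only [krausMap, trace_sum, trace_mul_cycle _ ρ]
  rw [← trace_sum, ← Finset.sum_mul, hK, Matrix.one_mul]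

theorem krausMap_comp_equiv (K : κ → Matrix ι ι ℂ) (e : κ' ≃ κ) :
    krausMap (K ∘ e) = krausMap K :=
  funext fun ρ => e.sum_comp fun i => K i * ρ * (K i)ᴴ

theorem IsKraus.comp_equiv [DecidableEq ι] {K : κ → Matrix ι ι ℂ} (hK : IsKraus K)
    (e : κ' ≃ κ) : IsKraus (K ∘ e) :=
  (e.sum_comp fun i => (K i)ᴴ * K i).trans hK

def krausThen (K : κ → Matrix ι ι ℂ) (L : κ' → Matrix ι ι ℂ) : κ × κ' → Matrix ι ι ℂ :=
  fun x => L x.2 * K x.1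

theorem krausMap_krausThen (K : κ → Matrix ι ι ℂ) (L : κ' → Matrix ι ι ℂ) (ρ : Matrix ι ι ℂ) :
    krausMap (krausThen K L) ρ = krausMap L (krausMap K ρ) := by
  simp only [krausMap, krausThen, Fintype.sum_prod_type, Finset.sum_comm (γ := κ),
    Finset.mul_sum, Finset.sum_mul, conjTranspose_mul, Matrix.mul_assoc]

theorem IsKraus.krausThen [DecidableEq ι] {K : κ → Matrix ι ι ℂ} {L : κ' → Matrix ι ι ℂ}
    (hK : IsKraus K) (hL : IsKraus L) : IsKraus (krausThen K L) := by
  have h : ∀ i, ∑ j, (L j * K i)ᴴ * (L j * K i) = (K i)ᴴ * K i := fun i => by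
    simp only [conjTranspose_mul, Matrix.mul_assoc, ← Finset.mul_sum]
    simp only [← Matrix.mul_assoc, ← Finset.sum_mul]
    rw [show ∑ j, (L j)ᴴ * L j = 1 from hL, Matrix.mul_one]
  simp only [IsKraus, _root_.krausThen, Fintype.sum_prod_type, h]
  exact hK

theorem mul_conj_mul_conj [Fintype ι'] [DecidableEq ι] {V : Matrix ι' ι ℂ} (hV : Vᴴ * V = 1)
    (A B : Matrix ι ι ℂ) : V * A * Vᴴ * (V * B * Vᴴ) = V * (A * B) * Vᴴ :=
  calc V * A * Vᴴ * (V * B * Vᴴ) = V * A * (Vᴴ * V) * B * Vᴴ := by simp only [Matrix.mul_assoc]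
    _ = V * (A * B) * Vᴴ := by rw [hV, Matrix.mul_one, Matrix.mul_assoc V A B]

theorem conjTranspose_mul_mul_conjTranspose (V : Matrix ι' ι ℂ) (A : Matrix ι ι ℂ) :
    (V * A * Vᴴ)ᴴ = V * Aᴴ * Vᴴ := by
  simp only [conjTranspose_mul, conjTranspose_conjTranspose, Matrix.mul_assoc]

/-- For an isometry `V`, the projection `1 - V Vᴴ` makes the transported family trace
preserving, and it annihilates every state supported on the range of `V`. -/
def krausDilate [DecidableEq ι'] (V : Matrix ι' ι ℂ) (K : κ → Matrix ι ι ℂ) :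
    Option κ → Matrix ι' ι' ℂ
  | none => 1 - V * Vᴴ
  | some i => V * K i * Vᴴ

theorem IsKraus.krausDilate [Fintype ι'] [DecidableEq ι] [DecidableEq ι'] {V : Matrix ι' ι ℂ}
    (hV : Vᴴ * V = 1) {K : κ → Matrix ι ι ℂ} (hK : IsKraus K) : IsKraus (krausDilate V K) := by
  have hproj : V * Vᴴ * (V * Vᴴ) = V * Vᴴ := by
    simpa using mul_conj_mul_conj hV 1 1
  have hcompl : (1 - V * Vᴴ)ᴴ * (1 - V * Vᴴ) = 1 - V * Vᴴ := by
    rw [conjTranspose_sub, conjTranspose_one, conjTranspose_mul, conjTranspose_conjTranspose]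
    calc (1 - V * Vᴴ) * (1 - V * Vᴴ) = 1 - V * Vᴴ - V * Vᴴ + V * Vᴴ * (V * Vᴴ) := by
          noncomm_ring
      _ = 1 - V * Vᴴ := by rw [hproj]; abel
  have hrange : ∑ i, (V * K i * Vᴴ)ᴴ * (V * K i * Vᴴ) = V * Vᴴ := by
    simp only [conjTranspose_mul_mul_conjTranspose, mul_conj_mul_conj hV]
    rw [← Matrix.sum_mul, ← Matrix.mul_sum, show ∑ i, (K i)ᴴ * K i = 1 from hK, Matrix.mul_one]
  rw [IsKraus, Fintype.sum_option]
  simp only [_root_.krausDilate, hcompl, hrange, sub_add_cancel]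

theorem krausMap_krausDilate [Fintype ι'] [DecidableEq ι] [DecidableEq ι'] {V : Matrix ι' ι ℂ}
    (hV : Vᴴ * V = 1) (K : κ → Matrix ι ι ℂ) (ρ : Matrix ι ι ℂ) :
    krausMap (krausDilate V K) (V * ρ * Vᴴ) = V * krausMap K ρ * Vᴴ := by
  have hcompl : (1 - V * Vᴴ) * V = 0 := by
    rw [Matrix.sub_mul, Matrix.mul_assoc, hV]; simp
  have hcompl' : V * ρ * Vᴴ * (1 - V * Vᴴ)ᴴ = 0 := by
    rw [← conjTranspose_conjTranspose (V * ρ * Vᴴ), ← conjTranspose_mul]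
    simp [conjTranspose_mul, ← Matrix.mul_assoc, hcompl]
  simp only [krausMap, Fintype.sum_option, krausDilate, Matrix.mul_assoc (1 - V * Vᴴ), hcompl',
    Matrix.mul_zero, zero_add, conjTranspose_mul_mul_conjTranspose, mul_conj_mul_conj hV]
  rw [← Matrix.sum_mul, ← Matrix.mul_sum]

theorem star_sqrt_mul_sqrt {x : ℝ} (hx : 0 ≤ x) : star (Real.sqrt x : ℂ) * Real.sqrt x = x := by
  rw [Complex.star_def, Complex.conj_ofReal, ← Complex.ofReal_mul, Real.mul_self_sqrt hx]

def measurePrepareKraus [DecidableEq ι] (t : κ → ι) (p : ι → κ → ℝ) : ι × κ → Matrix ι ι ℂ :=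
  fun x => single (t x.2) x.1 (Real.sqrt (p x.1 x.2) : ℂ)

theorem isKraus_measurePrepareKraus [DecidableEq ι] (t : κ → ι) {p : ι → κ → ℝ}
    (hp : ∀ q b, 0 ≤ p q b) (hsum : ∀ q, ∑ b, p q b = 1) :
    IsKraus (measurePrepareKraus t p) := by
  simp only [IsKraus, measurePrepareKraus, Fintype.sum_prod_type, conjTranspose_single,
    single_mul_single_same, star_sqrt_mul_sqrt (hp _ _)]
  have hrow : ∀ q, ∑ b, single q q (p q b : ℂ) = single q q 1 := fun q => by
    rw [← Complex.ofReal_one, ← hsum q, Complex.ofReal_sum]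
    exact (map_sum (singleAddMonoidHom (α := ℂ) q q) _ _).symm
  simp only [hrow, sum_single_one]

theorem krausMap_measurePrepareKraus_apply [DecidableEq ι] {t : κ → ι}
    (ht : Function.Injective t) {p : ι → κ → ℝ} (hp : ∀ q b, 0 ≤ p q b) (ρ : Matrix ι ι ℂ)
    (b : κ) : krausMap (measurePrepareKraus t p) ρ (t b) (t b) = ∑ q, p q b * ρ q q := by
  simp only [krausMap, measurePrepareKraus, Fintype.sum_prod_type, conjTranspose_single,
    single_mul_mul_single, Matrix.sum_apply]
  refine Finset.sum_congr rfl fun q _ => ?_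
  rw [Finset.sum_eq_single b
      (fun b' _ hb' => single_apply_of_ne _ _ _ _ _ fun h => hb' (ht h.1)) (by simp),
    single_apply_same, mul_right_comm, mul_comm (Real.sqrt _ : ℂ), star_sqrt_mul_sqrt (hp q b)]

end Kraus

section Embedding

variable {ι ι' : Type*} [DecidableEq ι] [DecidableEq ι']

theorem trace_diagonal_mul [Fintype ι] (d : ι → ℂ) (A : Matrix ι ι ℂ) :
    (diagonal d * A).trace = ∑ i, d i * A i i := by
  simp [trace, diagonal_mul]

def embeddingMatrix (f : ι → ι') : Matrix ι' ι ℂ :=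
  (1 : Matrix ι' ι' ℂ).submatrix id f

theorem conjTranspose_embeddingMatrix_mul_self [Fintype ι'] {f : ι → ι'}
    (hf : Function.Injective f) : (embeddingMatrix f)ᴴ * embeddingMatrix f = 1 := by
  rw [embeddingMatrix, conjTranspose_submatrix, conjTranspose_one,
    ← submatrix_mul _ _ _ _ _ Function.bijective_id, Matrix.mul_one, submatrix_one _ hf]

theorem embeddingMatrix_conj_single [Fintype ι] (f : ι → ι') (i j : ι) (c : ℂ) :
    embeddingMatrix f * single i j c * (embeddingMatrix f)ᴴ = single (f i) (f j) c := by
  have hleft : embeddingMatrix f * single i j c = single (f i) j c := by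
    ext a b
    by_cases hb : b = j
    · subst hb
      simp [embeddingMatrix, one_apply, single_apply, eq_comm]
    · simp [mul_single_apply_of_ne _ _ _ _ _ hb, Ne.symm hb]
  have hright : single (f i) j c * (embeddingMatrix f)ᴴ = single (f i) (f j) c := by
    ext a b
    by_cases ha : a = f i
    · subst ha
      simp [embeddingMatrix, one_apply, single_apply, eq_comm]
    · simp [single_mul_apply_of_ne _ _ _ _ _ ha, Ne.symm ha]
  rw [hleft, hright]

theorem sum_mul_diag_embeddingMatrix_conj [Fintype ι] [Fintype ι'] {f : ι → ι'}
    (hf : Function.Injective f) (d : ι' → ℂ) (ρ : Matrix ι ι ℂ) :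
    ∑ q, d q * (embeddingMatrix f * ρ * (embeddingMatrix f)ᴴ) q q = ∑ i, d (f i) * ρ i i := by
  have hdiag : (embeddingMatrix f)ᴴ * diagonal d * embeddingMatrix f = diagonal (d ∘ f) := by
    rw [embeddingMatrix, conjTranspose_submatrix, conjTranspose_one,
      ← submatrix_id_id (diagonal d), ← submatrix_mul _ _ _ _ _ Function.bijective_id,
      ← submatrix_mul _ _ _ _ _ Function.bijective_id, Matrix.one_mul, Matrix.mul_one,
      submatrix_diagonal _ _ hf]
  rw [← trace_diagonal_mul, ← trace_diagonal_mul, ← Matrix.mul_assoc, ← Matrix.mul_assoc,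
    trace_mul_comm, ← Matrix.mul_assoc, ← Matrix.mul_assoc, hdiag]
  rfl

end Embedding

section Weights

variable {ι : Type*} [DecidableEq ι]

def acceptWeight (Qa Qr : Finset ι) (i : ι) : ℝ :=
  if i ∈ Qa then 1 else if i ∈ Qr then 0 else 1 / 2

theorem acceptWeight_nonneg (Qa Qr : Finset ι) (i : ι) : 0 ≤ acceptWeight Qa Qr i := by
  unfold acceptWeight; split_ifs <;> norm_num

theorem acceptWeight_le_one (Qa Qr : Finset ι) (i : ι) : acceptWeight Qa Qr i ≤ 1 := by
  unfold acceptWeight; split_ifs <;> norm_num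

theorem acceptWeight_image {ι' : Type*} [DecidableEq ι'] {f : ι → ι'}
    (hf : Function.Injective f) (Qa Qr : Finset ι) (i : ι) :
    acceptWeight (Qa.image f) (Qr.image f) (f i) = acceptWeight Qa Qr i := by
  simp only [acceptWeight, hf.mem_finset_image]

theorem trace_projM {m : ℕ} (S : Finset (Fin m)) (A : Matrix (Fin m) (Fin m) ℂ) :
    (projM S * A).trace = ∑ i ∈ S, A i i := by
  simp [projM, trace_diagonal_mul, Finset.sum_ite_mem]

theorem sum_acceptWeight_mul_diag {m : ℕ} {Qa Qr : Finset (Fin m)} (h : Disjoint Qa Qr)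
    (ρ : Matrix (Fin m) (Fin m) ℂ) :
    ∑ i, (acceptWeight Qa Qr i : ℂ) * ρ i i =
      (ρ.trace + (projM Qa * ρ).trace - (projM Qr * ρ).trace) / 2 := by
  have hw : ∀ i, (acceptWeight Qa Qr i : ℂ) =
      (1 + (if i ∈ Qa then 1 else 0) - (if i ∈ Qr then 1 else 0)) / 2 := by
    intro i
    by_cases ha : i ∈ Qa
    · simp [acceptWeight, ha, Finset.disjoint_left.mp h ha]
    · by_cases hr : i ∈ Qr <;> simp [acceptWeight, ha, hr]
  rw [trace_projM, trace_projM]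
  simp only [hw, trace, diag, add_mul, sub_mul, div_mul_eq_mul_div, ite_mul, one_mul,
    zero_mul, ← Finset.sum_div, Finset.sum_add_distrib, Finset.sum_sub_distrib,
    Finset.sum_ite_mem, Finset.univ_inter]

end Weights

section Runs

variable {α : Type} {n : ℕ}

theorem qRun_eq_krausMap {k : ESym α → ℕ}
    (E : ∀ σ : ESym α, Fin (k σ) → Matrix (Fin (n + 1)) (Fin (n + 1)) ℂ) (w : List α) :
    qRun E w = krausMap (E .dollar)
      (w.foldl (fun ρ a => krausMap (E (.letter a)) ρ) (krausMap (E .cent) (single 0 0 1))) := by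
  simp only [qRun, List.foldl_cons, List.foldl_append, List.foldl_map, List.foldl_nil]
  rfl

theorem trace_qRun {k : ESym α → ℕ}
    {E : ∀ σ : ESym α, Fin (k σ) → Matrix (Fin (n + 1)) (Fin (n + 1)) ℂ}
    (hE : ∀ σ, IsKraus (E σ)) (w : List α) : (qRun E w).trace = 1 := by
  have hfold : ∀ (l : List (ESym α)) (ρ : Matrix (Fin (n + 1)) (Fin (n + 1)) ℂ),
      (l.foldl (fun ρ σ => krausMap (E σ) ρ) ρ).trace = ρ.trace := by
    intro l
    induction l with
    | nil => intro ρ; rfl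
    | cons σ l ih => intro ρ; rw [List.foldl_cons, ih, trace_krausMap (hE σ)]
  refine (hfold _ _).trans ?_
  simp [trace]

def QFA.ofKraus (κ : ESym α → Type) [∀ σ, Fintype (κ σ)]
    (K : ∀ σ, κ σ → Matrix (Fin (n + 1)) (Fin (n + 1)) ℂ) (hK : ∀ σ, IsKraus (K σ))
    (Qa : Finset (Fin (n + 1))) : QFA α where
  n := n
  k σ := Fintype.card (κ σ)
  E σ := K σ ∘ (Fintype.equivFin (κ σ)).symm
  kraus σ := (hK σ).comp_equiv _
  Qa := Qa

theorem QFA.qRun_ofKraus (κ : ESym α → Type) [∀ σ, Fintype (κ σ)]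
    (K : ∀ σ, κ σ → Matrix (Fin (n + 1)) (Fin (n + 1)) ℂ) (hK : ∀ σ, IsKraus (K σ))
    (Qa : Finset (Fin (n + 1))) (w : List α) :
    qRun (QFA.ofKraus κ K hK Qa).E w = krausMap (K .dollar)
      (w.foldl (fun ρ a => krausMap (K (.letter a)) ρ) (krausMap (K .cent) (single 0 0 1))) := by
  simp only [qRun_eq_krausMap, QFA.ofKraus, krausMap_comp_equiv]

end Runs

namespace PostQFA

variable {α : Type}

theorem half_lt_fa_iff (M : PostQFA α) (w : List α) : 1 / 2 < M.fa w ↔ M.prej w < M.pacc w := by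
  have hpos : 0 < M.pacc w + M.prej w := M.postPos w
  rw [fa, lt_div_iff₀ hpos]
  constructor <;> intro h <;> linarith

theorem Recognizes.mem_iff_half_lt_fa {M : PostQFA α} {L : Set (List α)} {ε : ℝ}
    (hM : M.Recognizes L ε) (hε : ε < 1 / 2) (w : List α) : w ∈ L ↔ 1 / 2 < M.fa w := by
  constructor
  · intro hw
    linarith [(hM w).1 hw]
  · intro hfa
    by_contra hw
    linarith [(hM w).2 hw]

variable (M : PostQFA α)

def stateEmbedding : Matrix (Fin (M.n + 2)) (Fin (M.n + 1)) ℂ :=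
  embeddingMatrix Fin.castSucc

def decisionTarget : Fin 2 → Fin (M.n + 2) :=
  ![0, Fin.last (M.n + 1)]

def decisionWeight (q : Fin (M.n + 2)) : Fin 2 → ℝ :=
  let a := acceptWeight (M.Qpa.image Fin.castSucc) (M.Qpr.image Fin.castSucc) q
  ![a, 1 - a]

def simKrausIndex : ESym α → Type
  | .dollar => Option (Fin (M.k .dollar)) × (Fin (M.n + 2) × Fin 2)
  | σ => Option (Fin (M.k σ))

instance : ∀ σ, Fintype (M.simKrausIndex σ)
  | .dollar => inferInstanceAs (Fintype (Option _ × _))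
  | .cent => inferInstanceAs (Fintype (Option _))
  | .letter _ => inferInstanceAs (Fintype (Option _))

def simKraus : ∀ σ, M.simKrausIndex σ → Matrix (Fin (M.n + 2)) (Fin (M.n + 2)) ℂ
  | .dollar => krausThen (krausDilate M.stateEmbedding (M.E .dollar))
      (measurePrepareKraus M.decisionTarget M.decisionWeight)
  | .cent => krausDilate M.stateEmbedding (M.E .cent)
  | .letter a => krausDilate M.stateEmbedding (M.E (.letter a))

theorem conjTranspose_stateEmbedding_mul_self : M.stateEmbeddingᴴ * M.stateEmbedding = 1 :=
  conjTranspose_embeddingMatrix_mul_self (Fin.castSucc_injective _)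

theorem decisionTarget_injective : Function.Injective M.decisionTarget := by
  intro i j h
  fin_cases i <;> fin_cases j <;> simp_all [decisionTarget, Fin.ext_iff]

theorem decisionWeight_nonneg (q : Fin (M.n + 2)) (b : Fin 2) : 0 ≤ M.decisionWeight q b := by
  fin_cases b <;> simp [decisionWeight, acceptWeight_nonneg, acceptWeight_le_one]

theorem sum_decisionWeight (q : Fin (M.n + 2)) : ∑ b, M.decisionWeight q b = 1 := by
  simp [decisionWeight]

theorem isKraus_simKraus (σ : ESym α) : IsKraus (M.simKraus σ) := by
  have hdilate : ∀ σ, IsKraus (krausDilate M.stateEmbedding (M.E σ)) := fun σ =>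
    IsKraus.krausDilate M.conjTranspose_stateEmbedding_mul_self (M.kraus σ)
  cases σ with
  | dollar =>
    exact (hdilate _).krausThen
      (isKraus_measurePrepareKraus _ M.decisionWeight_nonneg M.sum_decisionWeight)
  | cent => exact hdilate _
  | letter a => exact hdilate _

def toQFA : QFA α :=
  QFA.ofKraus M.simKrausIndex M.simKraus M.isKraus_simKraus {0}

theorem krausMap_simKraus_of_ne_dollar {σ : ESym α} (hσ : σ ≠ .dollar)
    (ρ : Matrix (Fin (M.n + 1)) (Fin (M.n + 1)) ℂ) :
    krausMap (M.simKraus σ) (M.stateEmbedding * ρ * M.stateEmbeddingᴴ) =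
      M.stateEmbedding * krausMap (M.E σ) ρ * M.stateEmbeddingᴴ := by
  cases σ with
  | dollar => exact absurd rfl hσ
  | cent => exact krausMap_krausDilate M.conjTranspose_stateEmbedding_mul_self _ ρ
  | letter a => exact krausMap_krausDilate M.conjTranspose_stateEmbedding_mul_self _ ρ

theorem krausMap_simKraus_dollar (ρ : Matrix (Fin (M.n + 1)) (Fin (M.n + 1)) ℂ) :
    krausMap (M.simKraus .dollar) (M.stateEmbedding * ρ * M.stateEmbeddingᴴ) =
      krausMap (measurePrepareKraus M.decisionTarget M.decisionWeight)
        (M.stateEmbedding * krausMap (M.E .dollar) ρ * M.stateEmbeddingᴴ) :=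
  (krausMap_krausThen _ _ _).trans
    (congrArg _ (krausMap_krausDilate M.conjTranspose_stateEmbedding_mul_self _ ρ))

theorem qRun_toQFA (w : List α) :
    qRun M.toQFA.E w = krausMap (measurePrepareKraus M.decisionTarget M.decisionWeight)
      (M.stateEmbedding * qRun M.E w * M.stateEmbeddingᴴ) := by
  have hinit : (single 0 0 1 : Matrix (Fin (M.n + 2)) (Fin (M.n + 2)) ℂ) =
      M.stateEmbedding * single (0 : Fin (M.n + 1)) (0 : Fin (M.n + 1)) (1 : ℂ) *
        M.stateEmbeddingᴴ :=
    (embeddingMatrix_conj_single Fin.castSucc 0 0 1).symm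
  unfold toQFA
  rw [QFA.qRun_ofKraus, qRun_eq_krausMap M.E, hinit,
    M.krausMap_simKraus_of_ne_dollar (by simp),
    List.foldl_hom (fun ρ => M.stateEmbedding * ρ * M.stateEmbeddingᴴ)
      fun ρ a => M.krausMap_simKraus_of_ne_dollar (σ := .letter a) (by simp) ρ,
    krausMap_simKraus_dollar]

theorem toQFA_fa (w : List α) : M.toQFA.fa w = (1 + M.pacc w - M.prej w) / 2 := by
  have hdiag := krausMap_measurePrepareKraus_apply M.decisionTarget_injective
    M.decisionWeight_nonneg (M.stateEmbedding * qRun M.E w * M.stateEmbeddingᴴ) 0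
  unfold QFA.fa
  rw [qRun_toQFA]
  erw [trace_projM, Finset.sum_singleton]
  rw [← show M.decisionTarget 0 = 0 from rfl, hdiag, stateEmbedding,
    sum_mul_diag_embeddingMatrix_conj (Fin.castSucc_injective _)]
  simp only [decisionWeight, Matrix.cons_val_zero, acceptWeight_image (Fin.castSucc_injective _),
    sum_acceptWeight_mul_diag M.disj, trace_qRun M.kraus]
  simp [pacc, prej, Complex.div_ofNat_re]

end PostQFA

theorem PostQAL_subset_QAL_general {α : Type} (L : Set (List α)) (hL : PostQAL L) :
    ∃ M : QFA α, L = {w : List α | 1 / 2 < M.fa w} := by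
  obtain ⟨M, ε, -, hε, hM⟩ := hL
  refine ⟨M.toQFA, Set.ext fun w => (hM.mem_iff_half_lt_fa hε w).trans ?_⟩
  change _ ↔ 1 / 2 < M.toQFA.fa w
  rw [M.half_lt_fa_iff, M.toQFA_fa]
  constructor <;> intro h <;> linarith

/-- Every language in `PostQAL` is in `QAL`: it is recognized by some RT-QFA
with (strict) cutpoint `1/2`. -/
theorem PostQAL_subset_QAL {α : Type} [Fintype α] (L : Set (List α)) (hL : PostQAL L) :
    ∃ M : QFA α, L = {w : List α | 1 / 2 < M.fa w} :=
  PostQAL_subset_QAL_general L hL
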